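/- Let A be an associative unital ring, let M = M₁ ⊕ ⋯ ⊕ M_r be a direct sum of r ≥ 1 simple A-modules with structure map η : A → End_ℤ(M), let D_M* be the set of A-linear endomorphisms of M preserving each M_i whose restriction to each M_i is nonzero, and let A_M ⊆ End_ℤ(M) be the subring generated by the image of η together with the inverses of all elements η(s) ∈ D_M* (such elements are bijective with inverses in D_M). Then: (i) the corestriction η_c : A → A_M sends every s ∈ A with η(s) ∈ D_M* to a unit of A_M; and (ii) for every associative unital ring B and ring homomorphism κ : A → B such that κ(s) is a unit in B for every s ∈ A with η(s) ∈ D_M*, and such that ker η_c ⊆ ker κ, there exists a unique ring homomorphism ρ : A_M → B with ρ ∘ η_c = κ. -/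

import Mathlib

/-- `D_M*`: the set of endomorphisms `f ∈ End_ℤ(M)` that are `A`-linear, preserve each
summand `M_i`, and restrict to a nonzero map on each `M_i`. -/
def diagonalUnits {A M : Type*} [Ring A] [AddCommGroup M]
    (η : A →+* AddMonoid.End M) {r : ℕ} (Mi : Fin r → AddSubgroup M) :
    Set (AddMonoid.End M) :=
  {f | (∀ a : A, f * η a = η a * f) ∧ (∀ i, ∀ x ∈ Mi i, f x ∈ Mi i) ∧
    (∀ i, ∃ x ∈ Mi i, f x ≠ 0)}

/-- The `r`-pointed local function ring `A_M ⊆ End_ℤ(M)`: the subring generated by the image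
of `η` together with the (two-sided) inverses of all elements `η s ∈ D_M*`. -/
def rPointedLocalFunctionRing {A M : Type*} [Ring A] [AddCommGroup M]
    (η : A →+* AddMonoid.End M) {r : ℕ} (Mi : Fin r → AddSubgroup M) :
    Subring (AddMonoid.End M) :=
  Subring.closure (Set.range η ∪
    {g : AddMonoid.End M | ∃ s : A, η s ∈ diagonalUnits η Mi ∧
      g * η s = 1 ∧ η s * g = 1})

/-- The corestriction `η_c : A → A_M` of `η` to the `r`-pointed local function ring. -/
def rPointedLocalFunctionRingMap {A M : Type*} [Ring A] [AddCommGroup M]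
    (η : A →+* AddMonoid.End M) {r : ℕ} (Mi : Fin r → AddSubgroup M) :
    A →+* rPointedLocalFunctionRing η Mi :=
  η.codRestrict (rPointedLocalFunctionRing η Mi) fun a =>
    Subring.subset_closure (Set.mem_union_left _ ⟨a, rfl⟩)

/-- In a monoid, a two-sided inverse of `f` commutes with everything commuting with `f`. -/
theorem aux_inv_comm {N : Type*} [Monoid N] {f g c : N}
    (h1 : g * f = 1) (h2 : f * g = 1) (hc : f * c = c * f) : g * c = c * g := by
  calc g * c = g * c * (f * g) := by rw [h2, mul_one]
    _ = g * (c * f) * g := by simp only [mul_assoc]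
    _ = g * (f * c) * g := by rw [hc]
    _ = (g * f) * (c * g) := by simp only [mul_assoc]
    _ = c * g := by rw [h1, one_mul]

/-- Two-sided inverses multiply (when one inverse commutes with the other element). -/
theorem aux_mul_inv {N : Type*} [Monoid N] {f g f' g' : N}
    (h1 : g * f = 1) (h2 : f * g = 1) (h1' : g' * f' = 1) (h2' : f' * g' = 1)
    (hc : g' * f = f * g') : (g * g') * (f * f') = 1 ∧ (f * f') * (g * g') = 1 := by
  constructor
  · calc g * g' * (f * f') = g * (g' * f) * f' := by simp only [mul_assoc]
      _ = g * (f * g') * f' := by rw [hc]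
      _ = (g * f) * (g' * f') := by simp only [mul_assoc]
      _ = 1 := by rw [h1, h1', one_mul]
  · have hgg : g * g' = g' * g := aux_inv_comm h1 h2 hc.symm
    have hfg : f' * g = g * f' := aux_inv_comm h2' h1' hgg.symm
    calc f * f' * (g * g') = f * (f' * g) * g' := by simp only [mul_assoc]
      _ = f * (g * f') * g' := by rw [hfg]
      _ = (f * g) * (f' * g') := by simp only [mul_assoc]
      _ = 1 := by rw [h2, h2', one_mul]

/-- Absorption: `c * f' * (g * g') = c * g` when `g'` is a right inverse of `f'`
and `g` commutes with `f'`. -/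
theorem aux_absorb {N : Type*} [Monoid N] {f' g g' c : N}
    (h2' : f' * g' = 1) (hc : f' * g = g * f') : c * f' * (g * g') = c * g := by
  calc c * f' * (g * g') = c * (f' * g) * g' := by simp only [mul_assoc]
    _ = c * (g * f') * g' := by rw [hc]
    _ = c * g * (f' * g') := by simp only [mul_assoc]
    _ = c * g := by rw [h2', mul_one]

section Aux

variable {A M : Type*} [Ring A] [AddCommGroup M]
variable (η : A →+* AddMonoid.End M) {r : ℕ} (Mi : Fin r → AddSubgroup M)

theorem aux_du_bijective (hInternal : DirectSum.IsInternal Mi)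
    (hstable : ∀ i, ∀ a : A, ∀ x ∈ Mi i, η a x ∈ Mi i)
    (hsimple : ∀ i, ∀ N : AddSubgroup M, N ≤ Mi i →
      (∀ a : A, ∀ x ∈ N, η a x ∈ N) → N = ⊥ ∨ N = Mi i)
    {f : AddMonoid.End M} (hf : f ∈ diagonalUnits η Mi) :
    Function.Bijective f := by
  classical
  obtain ⟨hcomm, hpres, hnzf⟩ := hf
  have happ : ∀ (a : A) (x : M), f (η a x) = η a (f x) := by
    intro a x
    exact congrArg (fun φ : AddMonoid.End M => φ x) (hcomm a)
  -- kernel trivial on each `Mi`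
  have hker : ∀ i, ∀ x ∈ Mi i, f x = 0 → x = 0 := by
    intro i
    have h := hsimple i ((AddMonoidHom.ker (f : M →+ M)) ⊓ Mi i) inf_le_right ?_
    · rcases h with h | h
      · intro x hx hfx
        have hx' : x ∈ ((AddMonoidHom.ker (f : M →+ M)) ⊓ Mi i) :=
          ⟨AddMonoidHom.mem_ker.mpr hfx, hx⟩
        rw [h] at hx'
        exact hx'
      · exfalso
        obtain ⟨x, hx, hfx⟩ := hnzf i
        rw [← h] at hx
        exact hfx (AddMonoidHom.mem_ker.mp hx.1)
    · rintro a x ⟨hx1, hx2⟩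
      refine ⟨AddMonoidHom.mem_ker.mpr ?_, hstable i a x hx2⟩
      have h0 : f x = 0 := AddMonoidHom.mem_ker.mp hx1
      exact (happ a x).trans (by rw [h0, map_zero])
  -- image of each `Mi` is `Mi`
  have himg : ∀ i, AddSubgroup.map (f : M →+ M) (Mi i) = Mi i := by
    intro i
    have h := hsimple i (AddSubgroup.map (f : M →+ M) (Mi i)) ?_ ?_
    · rcases h with h | h
      · exfalso
        obtain ⟨x, hx, hfx⟩ := hnzf i
        have hmem : f x ∈ AddSubgroup.map (f : M →+ M) (Mi i) := ⟨x, hx, rfl⟩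
        rw [h] at hmem
        exact hfx hmem
      · exact h
    · rintro y ⟨x, hx, rfl⟩
      exact hpres i x hx
    · rintro a y ⟨x, hx, rfl⟩
      exact ⟨η a x, hstable i a x hx, happ a x⟩
  constructor
  · -- injective
    rw [injective_iff_map_eq_zero]
    intro x hx
    obtain ⟨d, rfl⟩ := hInternal.2 x
    set gi : ∀ i, Mi i →+ Mi i := fun i =>
      AddMonoidHom.codRestrict ((f : M →+ M).comp (Mi i).subtype) (Mi i)
        (fun x => hpres i x x.2) with hgi
    have hcompat : (f : M →+ M).comp (DirectSum.coeAddMonoidHom Mi) =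
        (DirectSum.coeAddMonoidHom Mi).comp (DFinsupp.mapRange.addMonoidHom gi) := by
      refine DirectSum.addHom_ext fun i y => ?_
      show f (DirectSum.coeAddMonoidHom Mi (DirectSum.of (fun i => Mi i) i y)) =
        DirectSum.coeAddMonoidHom Mi (DFinsupp.mapRange.addMonoidHom gi (DirectSum.of (fun i => Mi i) i y))
      rw [DirectSum.coeAddMonoidHom_of]
      have hms : (DFinsupp.mapRange.addMonoidHom gi) (DirectSum.of (fun i => Mi i) i y) =
          DirectSum.of (fun i => Mi i) i (gi i y) := by
        have hof : ∀ (j : Fin r) (z : Mi j),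
            (DirectSum.of (fun i => Mi i) j) z = DFinsupp.single j z := fun _ _ => rfl
        simp only [DFinsupp.mapRange.addMonoidHom_apply, hof, DFinsupp.mapRange_single]
      have e1 := congrArg (DirectSum.coeAddMonoidHom Mi) hms
      have e2 : (DirectSum.coeAddMonoidHom Mi)
          (DirectSum.of (fun i => Mi i) i (gi i y)) = ((gi i y : Mi i) : M) :=
        DirectSum.coeAddMonoidHom_of Mi i (gi i y)
      exact (e1.trans e2).symm
    have h0 : (DirectSum.coeAddMonoidHom Mi) ((DFinsupp.mapRange.addMonoidHom gi) d) = 0 := by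
      have hc := congrArg (fun φ : DirectSum (Fin r) (fun i => Mi i) →+ M => φ d) hcompat
      simp only [AddMonoidHom.comp_apply] at hc
      exact hc.symm.trans hx
    have h1 : (DFinsupp.mapRange.addMonoidHom gi) d = 0 := by
      apply hInternal.1
      rw [h0, map_zero]
    have h2 : ∀ i, d i = 0 := by
      intro i
      have hcf := congrArg (fun z : DirectSum (Fin r) (fun i => Mi i) => z i) h1
      simp only [DFinsupp.mapRange.addMonoidHom_apply, DFinsupp.mapRange_apply,
        DFinsupp.zero_apply] at hcf
      have hz : f ((d i : M)) = 0 := by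
        have : ((gi i (d i) : Mi i) : M) = 0 := by rw [hcf]; rfl
        exact this
      exact Subtype.ext (hker i (d i) (d i).2 hz)
    have hd0 : d = 0 := DFinsupp.ext fun i => h2 i
    rw [hd0, map_zero]
  · -- surjective
    intro y
    obtain ⟨d, rfl⟩ := hInternal.2 y
    induction d using DirectSum.induction_on with
    | zero => exact ⟨0, by rw [map_zero, map_zero]⟩
    | of i x =>
      have hx : (x : M) ∈ AddSubgroup.map (f : M →+ M) (Mi i) := by
        rw [himg i]; exact x.2
      obtain ⟨z, _, hz⟩ := hx
      exact ⟨z, by rw [DirectSum.coeAddMonoidHom_of]; exact hz⟩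
    | add a b ha hb =>
      obtain ⟨za, hza⟩ := ha
      obtain ⟨zb, hzb⟩ := hb
      exact ⟨za + zb, by rw [map_add, map_add, hza, hzb]⟩

theorem aux_one_mem_du (hnz : ∀ i, Mi i ≠ ⊥) : η 1 ∈ diagonalUnits η Mi := by
  rw [map_one]
  refine ⟨fun a => by rw [one_mul, mul_one], fun i x hx => hx, fun i => ?_⟩
  by_contra h
  push_neg at h
  exact hnz i (AddSubgroup.eq_bot_iff_forall _ |>.mpr fun x hx => h x hx)

theorem aux_mul_mem_du (hInternal : DirectSum.IsInternal Mi)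
    (hstable : ∀ i, ∀ a : A, ∀ x ∈ Mi i, η a x ∈ Mi i)
    (hsimple : ∀ i, ∀ N : AddSubgroup M, N ≤ Mi i →
      (∀ a : A, ∀ x ∈ N, η a x ∈ N) → N = ⊥ ∨ N = Mi i)
    {f g : AddMonoid.End M} (hf : f ∈ diagonalUnits η Mi) (hg : g ∈ diagonalUnits η Mi) :
    f * g ∈ diagonalUnits η Mi := by
  have hfinj := (aux_du_bijective η Mi hInternal hstable hsimple hf).1
  obtain ⟨hfc, hfp, _⟩ := hf
  obtain ⟨hgc, hgp, hgn⟩ := hg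
  refine ⟨fun a => by rw [mul_assoc, hgc a, ← mul_assoc, hfc a, mul_assoc],
    fun i x hx => hfp i _ (hgp i x hx), fun i => ?_⟩
  obtain ⟨x, hx, hgx⟩ := hgn i
  refine ⟨x, hx, fun h => hgx ?_⟩
  have h' : f (g x) = f 0 := by rw [map_zero]; exact h
  exact hfinj h'

end Aux

set_option maxHeartbeats 1600000 in
set_option synthInstance.maxHeartbeats 200000 in
/-- Let `A` be an associative unital ring, `M = M₁ ⊕ ⋯ ⊕ M_r` an internal
direct sum of `r ≥ 1` simple `A`-modules with structure map `η : A → End_ℤ(M)`, and let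
`A_M ⊆ End_ℤ(M)` be the `r`-pointed local function ring, with corestriction `η_c : A → A_M`.
Then: (i) `η_c` sends every `s ∈ A` with `η s ∈ D_M*` to a unit of `A_M`; and (ii) for every
ring `B` and homomorphism `κ : A → B` such that `κ s` is a unit whenever `η s ∈ D_M*`, and
such that `ker η_c ⊆ ker κ`, there exists a unique ring homomorphism `ρ : A_M → B` with
`ρ ∘ η_c = κ`. -/
theorem rPointedLocalFunctionRing_universal_property
    {A M : Type*} [Ring A] [AddCommGroup M]
    (η : A →+* AddMonoid.End M) {r : ℕ} (hr : 0 < r)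
    (Mi : Fin r → AddSubgroup M)
    (hInternal : DirectSum.IsInternal Mi)
    (hnz : ∀ i, Mi i ≠ ⊥)
    (hstable : ∀ i, ∀ a : A, ∀ x ∈ Mi i, η a x ∈ Mi i)
    (hsimple : ∀ i, ∀ N : AddSubgroup M, N ≤ Mi i →
      (∀ a : A, ∀ x ∈ N, η a x ∈ N) → N = ⊥ ∨ N = Mi i) :
    (∀ s : A, η s ∈ diagonalUnits η Mi →
      IsUnit (rPointedLocalFunctionRingMap η Mi s)) ∧
    (∀ (B : Type*) [Ring B] (κ : A →+* B),
      (∀ s : A, η s ∈ diagonalUnits η Mi → IsUnit (κ s)) →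
      RingHom.ker (rPointedLocalFunctionRingMap η Mi) ≤ RingHom.ker κ →
      ∃! ρ : rPointedLocalFunctionRing η Mi →+* B,
        ρ.comp (rPointedLocalFunctionRingMap η Mi) = κ) := by
  classical
  have hinvEnd : ∀ s : A, η s ∈ diagonalUnits η Mi →
      ∃ g : AddMonoid.End M, g * η s = 1 ∧ η s * g = 1 := by
    intro s hs
    have hbij := aux_du_bijective η Mi hInternal hstable hsimple hs
    set e := AddEquiv.ofBijective (η s : M →+ M) hbij with he
    refine ⟨(e.symm : M ≃+ M).toAddMonoidHom, ?_, ?_⟩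
    · exact AddMonoidHom.ext fun x => e.symm_apply_apply x
    · exact AddMonoidHom.ext fun x => e.apply_symm_apply x
  constructor
  · -- Part (i)
    intro s hs
    obtain ⟨g, hg1, hg2⟩ := hinvEnd s hs
    have hmem : g ∈ rPointedLocalFunctionRing η Mi :=
      Subring.subset_closure (Set.mem_union_right _ ⟨s, hs, hg1, hg2⟩)
    exact ⟨⟨rPointedLocalFunctionRingMap η Mi s, ⟨g, hmem⟩,
      Subtype.ext hg2, Subtype.ext hg1⟩, rfl⟩
  · -- Part (ii)
    intro B _ κ hκ hker
    have hkerκ : ∀ a : A, η a = 0 → κ a = 0 := fun a ha => hker (Subtype.ext ha)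
    -- commutation facts
    have hcommEnd : ∀ (s : A), η s ∈ diagonalUnits η Mi →
        ∀ g : AddMonoid.End M, g * η s = 1 → η s * g = 1 →
          ∀ a : A, g * η a = η a * g := by
      intro s hs g hg1 hg2 a
      exact aux_inv_comm hg1 hg2 (hs.1 a)
    have hcommκ : ∀ (s a : A), η s ∈ diagonalUnits η Mi → κ s * κ a = κ a * κ s := by
      intro s a hs
      have h : η (s * a) = η (a * s) := by rw [map_mul, map_mul, hs.1 a]
      have h2 : κ (s * a) = κ (a * s) := by
        have h0 : κ (s * a - a * s) = 0 := hkerκ _ (by rw [map_sub, h, sub_self])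
        rw [map_sub] at h0
        exact sub_eq_zero.mp h0
      rw [← map_mul, ← map_mul, h2]
    have hcommB : ∀ (s : A), η s ∈ diagonalUnits η Mi →
        ∀ b : B, b * κ s = 1 → κ s * b = 1 → ∀ a : A, b * κ a = κ a * b := by
      intro s hs b hb1 hb2 a
      exact aux_inv_comm hb1 hb2 (hcommκ s a hs)
    -- the graph subring
    set gens : Set (AddMonoid.End M × B) :=
      Set.range (fun a => (η a, κ a)) ∪
        {p | ∃ s : A, η s ∈ diagonalUnits η Mi ∧
          p.1 * η s = 1 ∧ η s * p.1 = 1 ∧ p.2 * κ s = 1 ∧ κ s * p.2 = 1} with hgens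
    set C : Subring (AddMonoid.End M × B) := Subring.closure gens with hC
    have hone_du : η 1 ∈ diagonalUnits η Mi := aux_one_mem_du η Mi hnz
    -- normal form in C
    have hNF : ∀ x ∈ C, ∃ (a s : A) (g : AddMonoid.End M) (b : B),
        η s ∈ diagonalUnits η Mi ∧ g * η s = 1 ∧ η s * g = 1 ∧
        b * κ s = 1 ∧ κ s * b = 1 ∧ x = (η a * g, κ a * b) := by
      intro x hx
      induction hx using Subring.closure_induction with
      | mem p hp =>
        rcases hp with ⟨a, rfl⟩ | ⟨s, hs, h1, h2, h3, h4⟩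
        · exact ⟨a, 1, 1, 1, hone_du, by rw [map_one, mul_one], by rw [map_one, one_mul],
            by rw [map_one, mul_one], by rw [map_one, one_mul],
            by rw [mul_one, mul_one]⟩
        · exact ⟨1, s, p.1, p.2, hs, h1, h2, h3, h4, by simp⟩
      | zero =>
        exact ⟨0, 1, 1, 1, hone_du, by rw [map_one, mul_one], by rw [map_one, one_mul],
          by rw [map_one, mul_one], by rw [map_one, one_mul], by simp; rfl⟩
      | one =>
        exact ⟨1, 1, 1, 1, hone_du, by rw [map_one, mul_one], by rw [map_one, one_mul],
          by rw [map_one, mul_one], by rw [map_one, one_mul], by simp; rfl⟩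
      | add x y hxC hyC ihx ihy =>
        obtain ⟨a, s, g, b, hs, hg1, hg2, hb1, hb2, hxe⟩ := ihx
        obtain ⟨a', s', g', b', hs', hg1', hg2', hb1', hb2', hye⟩ := ihy
        have hss' : η (s * s') ∈ diagonalUnits η Mi := by
          rw [map_mul]; exact aux_mul_mem_du η Mi hInternal hstable hsimple hs hs'
        have hEnd := aux_mul_inv hg1 hg2 hg1' hg2' (hcommEnd s' hs' g' hg1' hg2' s)
        have hB := aux_mul_inv hb1 hb2 hb1' hb2' (hcommB s' hs' b' hb1' hb2' s)
        have hgg' : g' * g = g * g' :=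
          aux_inv_comm hg1' hg2' (hcommEnd s hs g hg1 hg2 s').symm
        have hbb' : b' * b = b * b' :=
          aux_inv_comm hb1' hb2' (hcommB s hs b hb1 hb2 s').symm
        refine ⟨a * s' + a' * s, s * s', g * g', b * b', hss',
          by rw [map_mul]; exact hEnd.1, by rw [map_mul]; exact hEnd.2,
          by rw [map_mul]; exact hB.1, by rw [map_mul]; exact hB.2, ?_⟩
        have e1 : η a * g = η (a * s') * (g * g') := by
          rw [map_mul]
          exact (aux_absorb hg2' (hcommEnd s hs g hg1 hg2 s').symm).symm
        have e2 : η a' * g' = η (a' * s) * (g * g') := by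
          rw [map_mul, ← hgg']
          exact (aux_absorb hg2 (hcommEnd s' hs' g' hg1' hg2' s).symm).symm
        have f1 : κ a * b = κ (a * s') * (b * b') := by
          rw [map_mul]
          exact (aux_absorb hb2' (hcommB s hs b hb1 hb2 s').symm).symm
        have f2 : κ a' * b' = κ (a' * s) * (b * b') := by
          rw [map_mul, ← hbb']
          exact (aux_absorb hb2 (hcommB s' hs' b' hb1' hb2' s).symm).symm
        rw [hxe, hye]
        have : (η a * g + η a' * g', κ a * b + κ a' * b') =
            (η (a * s' + a' * s) * (g * g'), κ (a * s' + a' * s) * (b * b')) := by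
          rw [e1, e2, f1, f2, map_add, map_add, add_mul, add_mul]
        exact this
      | neg x hxC ihx =>
        obtain ⟨a, s, g, b, hs, hg1, hg2, hb1, hb2, hxe⟩ := ihx
        exact ⟨-a, s, g, b, hs, hg1, hg2, hb1, hb2, by
          rw [hxe, map_neg, map_neg, neg_mul, neg_mul]
          rfl⟩
      | mul x y hxC hyC ihx ihy =>
        obtain ⟨a, s, g, b, hs, hg1, hg2, hb1, hb2, hxe⟩ := ihx
        obtain ⟨a', s', g', b', hs', hg1', hg2', hb1', hb2', hye⟩ := ihy
        have hss' : η (s * s') ∈ diagonalUnits η Mi := by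
          rw [map_mul]; exact aux_mul_mem_du η Mi hInternal hstable hsimple hs hs'
        have hEnd := aux_mul_inv hg1 hg2 hg1' hg2' (hcommEnd s' hs' g' hg1' hg2' s)
        have hB := aux_mul_inv hb1 hb2 hb1' hb2' (hcommB s' hs' b' hb1' hb2' s)
        refine ⟨a * a', s * s', g * g', b * b', hss',
          by rw [map_mul]; exact hEnd.1, by rw [map_mul]; exact hEnd.2,
          by rw [map_mul]; exact hB.1, by rw [map_mul]; exact hB.2, ?_⟩
        have e1 : (η a * g) * (η a' * g') = η (a * a') * (g * g') := by
          rw [map_mul]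
          calc η a * g * (η a' * g') = η a * (g * η a') * g' := by simp only [mul_assoc]
            _ = η a * (η a' * g) * g' := by rw [hcommEnd s hs g hg1 hg2 a']
            _ = η a * η a' * (g * g') := by simp only [mul_assoc]
        have f1 : (κ a * b) * (κ a' * b') = κ (a * a') * (b * b') := by
          rw [map_mul]
          calc κ a * b * (κ a' * b') = κ a * (b * κ a') * b' := by simp only [mul_assoc]
            _ = κ a * (κ a' * b) * b' := by rw [hcommB s hs b hb1 hb2 a']
            _ = κ a * κ a' * (b * b') := by simp only [mul_assoc]
        rw [hxe, hye]
        exact Prod.ext e1 f1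
    -- injectivity of the first projection on C
    have hinj : ∀ b : B, ((0 : AddMonoid.End M), b) ∈ C → b = 0 := by
      intro b hb
      obtain ⟨a, s, g, b₀, hs, hg1, hg2, hb1, hb2, he⟩ := hNF _ hb
      have h1 : (0 : AddMonoid.End M) = η a * g := congrArg Prod.fst he
      have h2 : b = κ a * b₀ := congrArg Prod.snd he
      have ha : η a = 0 := by
        calc η a = η a * (g * η s) := by rw [hg1, mul_one]
          _ = (η a * g) * η s := by rw [mul_assoc]
          _ = 0 * η s := by rw [← h1]
          _ = 0 := zero_mul _
      rw [h2, hkerκ a ha, zero_mul]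
    have huniq : ∀ (x : AddMonoid.End M) (b b' : B),
        (x, b) ∈ C → (x, b') ∈ C → b = b' := by
      intro x b b' hb hb'
      have hsub : ((x, b) - (x, b')) ∈ C := sub_mem hb hb'
      have : ((0 : AddMonoid.End M), b - b') ∈ C := by
        have : ((x, b) - (x, b') : AddMonoid.End M × B) = (x - x, b - b') := rfl
        rw [this, sub_self] at hsub
        exact hsub
      have := hinj _ this
      exact sub_eq_zero.mp this
    -- surjectivity onto A_M
    have hsurj : ∀ x ∈ rPointedLocalFunctionRing η Mi, ∃ b : B, (x, b) ∈ C := by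
      intro x hx
      have hx' : x ∈ Subring.closure (Set.range η ∪
          {g : AddMonoid.End M | ∃ s : A, η s ∈ diagonalUnits η Mi ∧
            g * η s = 1 ∧ η s * g = 1}) := hx
      clear hx
      induction hx' using Subring.closure_induction with
      | mem p hp =>
        rcases hp with ⟨a, rfl⟩ | ⟨s, hs, h1, h2⟩
        · exact ⟨κ a, Subring.subset_closure (Set.mem_union_left _ ⟨a, rfl⟩)⟩
        · obtain ⟨u, hu⟩ := hκ s hs
          refine ⟨(↑u⁻¹ : B), Subring.subset_closure (Set.mem_union_right _
            ⟨s, hs, h1, h2, ?_, ?_⟩)⟩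
          · rw [← hu]; exact u.inv_mul
          · rw [← hu]; exact u.mul_inv
      | zero => exact ⟨0, zero_mem C⟩
      | one => exact ⟨1, one_mem C⟩
      | add x y hxM hyM ihx ihy =>
        obtain ⟨bx, hbx⟩ := ihx
        obtain ⟨by', hby⟩ := ihy
        exact ⟨bx + by', add_mem hbx hby⟩
      | neg x hxM ihx =>
        obtain ⟨bx, hbx⟩ := ihx
        exact ⟨-bx, neg_mem hbx⟩
      | mul x y hxM hyM ihx ihy =>
        obtain ⟨bx, hbx⟩ := ihx
        obtain ⟨by', hby⟩ := ihy
        exact ⟨bx * by', mul_mem hbx hby⟩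
    have hchoice : ∀ x : rPointedLocalFunctionRing η Mi,
        ∃ b : B, ((x : AddMonoid.End M), b) ∈ C := fun x => hsurj x x.2
    choose F hF using hchoice
    set ρ : rPointedLocalFunctionRing η Mi →+* B :=
      { toFun := F
        map_one' := huniq 1 (F 1) 1 (hF 1) (one_mem C)
        map_mul' := fun x y => huniq _ _ _ (hF (x * y)) (mul_mem (hF x) (hF y))
        map_zero' := huniq 0 (F 0) 0 (hF 0) (zero_mem C)
        map_add' := fun x y => huniq _ _ _ (hF (x + y)) (add_mem (hF x) (hF y)) } with hρ
    have hcomp : ρ.comp (rPointedLocalFunctionRingMap η Mi) = κ := by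
      refine RingHom.ext fun a => ?_
      exact huniq (η a) _ (κ a) (hF (rPointedLocalFunctionRingMap η Mi a))
        (Subring.subset_closure (Set.mem_union_left _ ⟨a, rfl⟩))
    refine ⟨ρ, hcomp, ?_⟩
    intro ρ' hρ'
    have key : ∀ (x : AddMonoid.End M) (hx : x ∈ Subring.closure (Set.range η ∪
        {g : AddMonoid.End M | ∃ s : A, η s ∈ diagonalUnits η Mi ∧
          g * η s = 1 ∧ η s * g = 1})),
        ρ' ⟨x, hx⟩ = ρ ⟨x, hx⟩ := by
      intro x hx
      induction hx using Subring.closure_induction with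
      | mem p hp =>
        rcases hp with ⟨a, rfl⟩ | ⟨s, hs, h1, h2⟩
        · have h1 : ρ' (rPointedLocalFunctionRingMap η Mi a) = κ a :=
            RingHom.congr_fun hρ' a
          have h2 : ρ (rPointedLocalFunctionRingMap η Mi a) = κ a :=
            RingHom.congr_fun hcomp a
          exact h1.trans h2.symm
        · set G : rPointedLocalFunctionRing η Mi :=
            ⟨p, Subring.subset_closure (Set.mem_union_right _ ⟨s, hs, h1, h2⟩)⟩ with hG
          have hG1 : G * rPointedLocalFunctionRingMap η Mi s = 1 := Subtype.ext h1
          have hG2 : rPointedLocalFunctionRingMap η Mi s * G = 1 := Subtype.ext h2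
          have hks' : ρ' (rPointedLocalFunctionRingMap η Mi s) = κ s :=
            RingHom.congr_fun hρ' s
          have hks : ρ (rPointedLocalFunctionRingMap η Mi s) = κ s :=
            RingHom.congr_fun hcomp s
          have r1 : ρ' G * κ s = 1 := by
            rw [← hks', ← map_mul, hG1, map_one]
          have r2 : κ s * ρ G = 1 := by
            rw [← hks, ← map_mul, hG2, map_one]
          calc ρ' G = ρ' G * (κ s * ρ G) := by rw [r2, mul_one]
            _ = (ρ' G * κ s) * ρ G := by rw [mul_assoc]
            _ = ρ G := by rw [r1, one_mul]
      | zero =>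
        have h0 : (⟨0, zero_mem _⟩ : rPointedLocalFunctionRing η Mi) = 0 := Subtype.ext rfl
        rw [h0, ρ'.map_zero, ρ.map_zero]
      | one =>
        have h0 : (⟨1, one_mem _⟩ : rPointedLocalFunctionRing η Mi) = 1 := Subtype.ext rfl
        rw [h0, ρ'.map_one, ρ.map_one]
      | add x y hxM hyM ihx ihy =>
        have h0 : (⟨x + y, add_mem hxM hyM⟩ : rPointedLocalFunctionRing η Mi) =
            ⟨x, hxM⟩ + ⟨y, hyM⟩ := Subtype.ext rfl
        rw [h0, ρ'.map_add, ρ.map_add, ihx, ihy]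
      | neg x hxM ihx =>
        have h0 : (⟨-x, neg_mem hxM⟩ : rPointedLocalFunctionRing η Mi) = -⟨x, hxM⟩ := Subtype.ext rfl
        rw [h0, ρ'.map_neg, ρ.map_neg, ihx]
      | mul x y hxM hyM ihx ihy =>
        have h0 : (⟨x * y, mul_mem hxM hyM⟩ : rPointedLocalFunctionRing η Mi) =
            ⟨x, hxM⟩ * ⟨y, hyM⟩ := Subtype.ext rfl
        rw [h0, ρ'.map_mul, ρ.map_mul, ihx, ihy]
    refine RingHom.ext fun x => ?_
    obtain ⟨x, hx⟩ := x
    exact key x hx
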